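/- arXiv:0912.3820 — 9 statements merged into one kernel-verified Lean document; each statement's English description precedes it below -/
import Mathlib

section
/- Let λ, μ be partitions of n with λ ≤ μ in dominance order, and suppose ∑_{j=1}^k λ*_j = ∑_{j=1}^k μ*_j for some k ≥ 1. Then ∑_{j=1}^{λ*_{k+1}} λ_j = ∑_{j=1}^{λ*_{k+1}} μ_j. -/
open Finset

/-- Partial sum `∑_{j=1}^i f j` (one-indexed). -/
def psum (f : ℕ → ℕ) (i : ℕ) : ℕ := ∑ j ∈ Finset.Icc 1 i, f j

/-- Conjugate partition: `conj f j = #{k ≥ 1 : f k ≥ j}`. -/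
noncomputable def conj (f : ℕ → ℕ) (j : ℕ) : ℕ := Set.ncard {k : ℕ | 1 ≤ k ∧ j ≤ f k}

/-- `f` is a partition of `n` (one-indexed, weakly decreasing, eventually zero). -/
def IsPartitionOf (f : ℕ → ℕ) (n : ℕ) : Prop :=
  (∀ i, 1 ≤ i → f (i + 1) ≤ f i) ∧ ∃ N, (∀ i, N < i → f i = 0) ∧ psum f N = n

/-- Weakly decreasing (from index 1 on). -/
def Decr (f : ℕ → ℕ) : Prop := ∀ i, 1 ≤ i → f (i + 1) ≤ f i

/-- `A_i = ∑_{j ≤ i} (α_j + β_j)`. -/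
def AA (f g : ℕ → ℕ) (i : ℕ) : ℕ := ∑ j ∈ Finset.Icc 1 i, (f j + g j)

/-- `B_i = ∑_{j < i} (α_j + β_j) + α_i`. -/
def BB (f g : ℕ → ℕ) (i : ℕ) : ℕ := (∑ j ∈ Finset.Icc 1 (i - 1), (f j + g j)) + f i

/-- Multiplicity of `i` as a part. -/
noncomputable def mult (f : ℕ → ℕ) (i : ℕ) : ℕ := conj f i - conj f (i + 1)

/-! The conjugate partial sum `∑_{j ≤ k} f*_j` equals `∑_i min (f_i, k)`, so for two partitions of
`n` with equal conjugate partial sums the excesses `∑_i (f_i - k)₊` over `k` agree. The first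
`t = λ*_{k+1}` parts of `λ` are exactly those exceeding `k`, hence
`λ_1 + ⋯ + λ_t = t k + ∑_i (λ_i - k)₊ = t k + ∑_i (μ_i - k)₊ ≥ μ_1 + ⋯ + μ_t`,
and dominance gives the reverse inequality. -/

section

variable {f : ℕ → ℕ} {N : ℕ}

lemma psum_mono (f : ℕ → ℕ) : Monotone (psum f) := fun _ _ h =>
  sum_le_sum_of_subset (Icc_subset_Icc_right h)

lemma psum_eq_of_le {M : ℕ} (hN : ∀ i, N < i → f i = 0) (h : N ≤ M) : psum f M = psum f N :=
  (sum_subset (Icc_subset_Icc_right h) fun i hi hiN => by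
    simp only [mem_Icc] at hi hiN
    exact hN i (by omega)).symm

lemma psum_le_mul_add_psum_tsub (f : ℕ → ℕ) (t k : ℕ) :
    psum f t ≤ t * k + psum (fun i => f i - k) t := by
  calc psum f t ≤ ∑ i ∈ Icc 1 t, (k + (f i - k)) := sum_le_sum fun i _ => by omega
    _ = t * k + psum (fun i => f i - k) t := by simp [psum, sum_add_distrib]

lemma psum_eq_mul_add_psum_tsub {t k : ℕ} (h : ∀ i ∈ Icc 1 t, k ≤ f i) :
    psum f t = t * k + psum (fun i => f i - k) t := by
  calc psum f t = ∑ i ∈ Icc 1 t, (k + (f i - k)) := sum_congr rfl fun i hi => by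
          have := h i hi; omega
    _ = t * k + psum (fun i => f i - k) t := by simp [psum, sum_add_distrib]

lemma conj_eq_card_filter (hN : ∀ i, N < i → f i = 0) {j : ℕ} (hj : 1 ≤ j) :
    conj f j = #{i ∈ Icc 1 N | j ≤ f i} := by
  rw [conj, ← Set.ncard_coe_finset]
  congr 1
  ext i
  simp only [Set.mem_ofPred_eq, coe_filter, mem_Icc]
  constructor
  · rintro ⟨hi, hji⟩
    refine ⟨⟨hi, not_lt.mp fun hNi => ?_⟩, hji⟩
    have := hN i hNi
    omega
  · rintro ⟨⟨hi, -⟩, hji⟩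
    exact ⟨hi, hji⟩

lemma conj_le (hN : ∀ i, N < i → f i = 0) {j : ℕ} (hj : 1 ≤ j) : conj f j ≤ N := by
  rw [conj_eq_card_filter hN hj]
  exact (card_filter_le _ _).trans (by simp)

lemma psum_conj_eq_sum_min (hN : ∀ i, N < i → f i = 0) (k : ℕ) :
    psum (conj f) k = ∑ i ∈ Icc 1 N, min (f i) k := by
  rw [psum, sum_congr rfl fun j hj => conj_eq_card_filter hN (mem_Icc.mp hj).1]
  simp only [card_filter]
  rw [sum_comm]
  refine sum_congr rfl fun i _ => ?_
  rw [← card_filter, show {j ∈ Icc 1 k | j ≤ f i} = Icc 1 (min (f i) k) by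
    ext; simp only [mem_filter, mem_Icc, le_inf_iff]; omega]
  simp

lemma psum_conj_add_psum_tsub (hN : ∀ i, N < i → f i = 0) (k : ℕ) :
    psum (conj f) k + psum (fun i => f i - k) N = psum f N := by
  rw [psum_conj_eq_sum_min hN, psum, psum, ← sum_add_distrib]
  exact sum_congr rfl fun i _ => by omega

lemma le_apply_iff_le_conj (hf : Decr f) (hN : ∀ i, N < i → f i = 0) {i j : ℕ}
    (hi : 1 ≤ i) (hj : 1 ≤ j) : j ≤ f i ↔ i ≤ conj f j := by
  have hanti : AntitoneOn f {x | 1 ≤ x} := antitoneOn_nat_Ici_of_succ_le hf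
  rw [conj_eq_card_filter hN hj]
  constructor
  · intro hji
    calc i = #(Icc 1 i) := by simp
      _ ≤ _ := card_le_card fun x hx => by
        simp only [mem_Icc] at hx
        have hjx : j ≤ f x := hji.trans (hanti hx.1 hi hx.2)
        simp only [mem_filter, mem_Icc]
        exact ⟨⟨hx.1, not_lt.mp fun hNx => by have := hN x hNx; omega⟩, hjx⟩
  · intro h
    by_contra! hfi
    have : #{x ∈ Icc 1 N | j ≤ f x} ≤ #(Icc 1 (i - 1)) := card_le_card fun x hx => by
      simp only [mem_filter, mem_Icc] at hx ⊢
      exact ⟨hx.1.1, not_lt.mp fun hix => by have := hanti hi hx.1.1 (by omega : i ≤ x); omega⟩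
    simp only [Nat.card_Icc, add_tsub_cancel_right] at this
    omega

lemma psum_conj_succ (hf : Decr f) (hN : ∀ i, N < i → f i = 0) (k : ℕ) :
    psum f (conj f (k + 1)) = conj f (k + 1) * k + psum (fun i => f i - k) N := by
  have hk : 1 ≤ k + 1 := Nat.le_add_left 1 k
  have hbig : ∀ i ∈ Icc 1 (conj f (k + 1)), k ≤ f i := fun i hi => by
    have := (le_apply_iff_le_conj hf hN (mem_Icc.mp hi).1 hk).2 (mem_Icc.mp hi).2
    omega
  have hsmall : ∀ i, conj f (k + 1) < i → f i - k = 0 := fun i hi => by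
    have := (le_apply_iff_le_conj hf hN (by omega : 1 ≤ i) hk).not.2 (by omega)
    omega
  rw [psum_eq_mul_add_psum_tsub hbig, psum_eq_of_le hsmall (conj_le hN hk)]

end

theorem stmt3_general (n : ℕ) (l m : ℕ → ℕ) (hl : IsPartitionOf l n) (hm : IsPartitionOf m n)
    (hdom : ∀ i, 1 ≤ i → psum l i ≤ psum m i)
    (k : ℕ) (heq : psum (conj l) k = psum (conj m) k) :
    psum l (conj l (k + 1)) = psum m (conj l (k + 1)) := by
  obtain ⟨hl_decr, Nl, hNl, hl_sum⟩ := hl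
  obtain ⟨-, Nm, hNm, hm_sum⟩ := hm
  set N := max Nl Nm
  have hlN : ∀ i, N < i → l i = 0 := fun i hi => hNl i (by omega)
  have hmN : ∀ i, N < i → m i = 0 := fun i hi => hNm i (by omega)
  have hl_tail := psum_conj_add_psum_tsub hlN k
  have hm_tail := psum_conj_add_psum_tsub hmN k
  rw [psum_eq_of_le hNl (le_max_left Nl Nm), hl_sum] at hl_tail
  rw [psum_eq_of_le hNm (le_max_right Nl Nm), hm_sum] at hm_tail
  have hexcess : psum (fun i => l i - k) N = psum (fun i => m i - k) N := by omega
  set t := conj l (k + 1)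
  rcases t.eq_zero_or_pos with ht | ht
  · simp [ht, psum]
  refine le_antisymm (hdom t ht) ?_
  calc psum m t ≤ t * k + psum (fun i => m i - k) t := psum_le_mul_add_psum_tsub m t k
    _ ≤ t * k + psum (fun i => m i - k) N := by
        gcongr
        exact psum_mono _ (conj_le hlN (Nat.le_add_left 1 k))
    _ = psum l t := by rw [← hexcess, psum_conj_succ hl_decr hlN]

theorem stmt3 (n : ℕ) (l m : ℕ → ℕ) (hl : IsPartitionOf l n) (hm : IsPartitionOf m n)
    (hdom : ∀ i, 1 ≤ i → psum l i ≤ psum m i)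
    (k : ℕ) (hk : 1 ≤ k) (heq : psum (conj l) k = psum (conj m) k) :
    psum l (conj l (k + 1)) = psum m (conj l (k + 1)) :=
  stmt3_general n l m hl hm hdom k heq
end

section
/- For SO(2n+1) in odd characteristic: let (α,β), (α',β') be pairs of partitions in Λ¹_{B_n} = {(α,β) : |α|+|β| = n, α_{i+1} ≤ β_i ≤ α_i + 2 for all i}, and let λ (resp. λ') be the partition of 2n+1 defined by λ_{2i−1} = 2α_i + 1 + δ_i, λ_{2i} = 2β_i − 1 + θ_i with δ, θ as in the Springer correspondence (δ_i = 1 if β_i = α_i+2, δ_i = −1 if i≥2 and α_i = β_{i−1}, else 0; θ_i = 1 if β_i = α_{i+1}, θ_i = −1 if β_i = α_i+2, else 0). Then λ ≤ λ' in dominance order if and only if A_i ≤ A'_i and B_i ≤ B'_i for all i, where A_i = ∑_{j≤i}(α_j + β_j) and B_i = ∑_{j<i}(α_j + β_j) + α_i. -/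
open Finset

/-- A pair of partitions with `|α|+|β| = n`. -/
def IsPairOf (f g : ℕ → ℕ) (n : ℕ) : Prop :=
  Decr f ∧ Decr g ∧ ∃ N, (∀ i, N < i → f i = 0 ∧ g i = 0) ∧ psum f N + psum g N = n

lemma AA_succ (f g : ℕ → ℕ) (i : ℕ) :
    AA f g (i + 1) = AA f g i + (f (i + 1) + g (i + 1)) :=
  Finset.sum_Icc_succ_top (by omega) _

lemma BB_def (f g : ℕ → ℕ) (i : ℕ) : BB f g i = AA f g (i - 1) + f i := rfl

lemma AA_eq_BB (f g : ℕ → ℕ) (i : ℕ) (hi : 1 ≤ i) :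
    AA f g i = BB f g i + g i := by
  obtain ⟨k, rfl⟩ : ∃ k, i = k + 1 := ⟨i - 1, by omega⟩
  rw [AA_succ, BB_def]
  simp only [Nat.add_sub_cancel]
  omega

lemma formulas (α β : ℕ → ℕ) (δ θ : ℕ → ℤ) (lam : ℕ → ℤ)
    (ha : Decr α) (hb : Decr β)
    (hδ : ∀ i, 1 ≤ i → δ i =
      if β i = α i + 2 then 1 else if 2 ≤ i ∧ α i = β (i - 1) then -1 else 0)
    (hθ : ∀ i, 1 ≤ i → θ i =
      if β i = α (i + 1) then 1 else if β i = α i + 2 then -1 else 0)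
    (hlam : ∀ i, 1 ≤ i →
      lam (2 * i - 1) = 2 * (α i : ℤ) + 1 + δ i ∧ lam (2 * i) = 2 * (β i : ℤ) - 1 + θ i) :
    ∀ i, 1 ≤ i →
      (∑ j ∈ Icc 1 (2 * i - 1), lam j)
          = 2 * (BB α β i : ℤ) + 1 + (if β i = α i + 2 then 1 else 0) ∧
      (∑ j ∈ Icc 1 (2 * i), lam j)
          = 2 * (AA α β i : ℤ) + (if β i = α (i + 1) then 1 else 0) := by
  intro i
  induction i with
  | zero => omega
  | succ k ih =>
    intro _
    rcases Nat.eq_zero_or_pos k with hk | hk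
    · subst hk
      simp only [Nat.zero_add]
      have h1 := hlam 1 le_rfl
      have hδ1 := hδ 1 le_rfl
      have hθ1 := hθ 1 le_rfl
      have ha1 := ha 1 le_rfl
      have e2 : (BB α β 1 : ℤ) = (α 1 : ℤ) := by simp [BB_def, AA]
      have hodd : (∑ j ∈ Icc 1 (2 * 1 - 1), lam j)
          = 2 * (BB α β 1 : ℤ) + 1 + (if β 1 = α 1 + 2 then 1 else 0) := by
        rw [show 2 * 1 - 1 = 1 from rfl, Finset.Icc_self, Finset.sum_singleton]
        have e : lam 1 = 2 * (α 1 : ℤ) + 1 + δ 1 := by simpa using h1.1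
        rw [e, hδ1, e2]
        split_ifs <;> omega
      refine ⟨hodd, ?_⟩
      rw [show (2 : ℕ) * 1 = 1 + 1 from rfl, Finset.sum_Icc_succ_top (by omega),
        ← show (2 : ℕ) * 1 - 1 = 1 from rfl, hodd, show (1 : ℕ) + 1 = 2 * 1 from rfl,
        h1.2, hθ1, AA_eq_BB α β 1 le_rfl]
      have e3 : α (1 + 1) = α 2 := rfl
      push_cast [e2]
      split_ifs <;> omega
    · obtain ⟨ihodd, iheven⟩ := ih hk
      have hδk : δ (k + 1) = if β (k + 1) = α (k + 1) + 2 then 1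
          else if α (k + 1) = β k then -1 else 0 := by
        rw [hδ (k + 1) (by omega)]
        simp [show 2 ≤ k + 1 by omega]
      have hbk := hb k hk
      have hak := ha (k + 1) (by omega)
      have hodd : (∑ j ∈ Icc 1 (2 * (k + 1) - 1), lam j)
          = 2 * (BB α β (k + 1) : ℤ) + 1 + (if β (k + 1) = α (k + 1) + 2 then 1 else 0) := by
        rw [show 2 * (k + 1) - 1 = 2 * k + 1 from by omega,
          Finset.sum_Icc_succ_top (by omega), iheven]
        have e : lam (2 * k + 1) = 2 * (α (k + 1) : ℤ) + 1 + δ (k + 1) := by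
          have := (hlam (k + 1) (by omega)).1
          rwa [show 2 * (k + 1) - 1 = 2 * k + 1 from by omega] at this
        rw [e, hδk, BB_def, show (k + 1) - 1 = k from rfl]
        push_cast
        split_ifs <;> omega
      refine ⟨hodd, ?_⟩
      rw [show 2 * (k + 1) = (2 * k + 1) + 1 from by omega,
        Finset.sum_Icc_succ_top (by omega),
        show (2 * k + 1) + 1 = 2 * (k + 1) from by omega]
      rw [show (2 : ℕ) * k + 1 = 2 * (k + 1) - 1 from by omega, hodd]
      rw [(hlam (k + 1) (by omega)).2, hθ (k + 1) (by omega),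
        AA_eq_BB α β (k + 1) (by omega)]
      push_cast
      split_ifs <;> omega

/-- for `SO(2n+1)`, `p ≠ 2`: `λ ≤ λ'` iff `(α,β) ≤ (α',β')`. -/
theorem stmt8 (n : ℕ) (α β α' β' : ℕ → ℕ) (δ θ δ' θ' : ℕ → ℤ) (lam lam' : ℕ → ℤ)
    (hp : IsPairOf α β n) (hp' : IsPairOf α' β' n)
    (hL : ∀ i, 1 ≤ i → α (i + 1) ≤ β i ∧ β i ≤ α i + 2)
    (hL' : ∀ i, 1 ≤ i → α' (i + 1) ≤ β' i ∧ β' i ≤ α' i + 2)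
    (hδ : ∀ i, 1 ≤ i → δ i =
      if β i = α i + 2 then 1 else if 2 ≤ i ∧ α i = β (i - 1) then -1 else 0)
    (hθ : ∀ i, 1 ≤ i → θ i =
      if β i = α (i + 1) then 1 else if β i = α i + 2 then -1 else 0)
    (hδ' : ∀ i, 1 ≤ i → δ' i =
      if β' i = α' i + 2 then 1 else if 2 ≤ i ∧ α' i = β' (i - 1) then -1 else 0)
    (hθ' : ∀ i, 1 ≤ i → θ' i =
      if β' i = α' (i + 1) then 1 else if β' i = α' i + 2 then -1 else 0)
    (hlam : ∀ i, 1 ≤ i →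
      lam (2 * i - 1) = 2 * (α i : ℤ) + 1 + δ i ∧ lam (2 * i) = 2 * (β i : ℤ) - 1 + θ i)
    (hlam' : ∀ i, 1 ≤ i →
      lam' (2 * i - 1) = 2 * (α' i : ℤ) + 1 + δ' i ∧ lam' (2 * i) = 2 * (β' i : ℤ) - 1 + θ' i) :
    (∀ i, 1 ≤ i → ∑ j ∈ Finset.Icc 1 i, lam j ≤ ∑ j ∈ Finset.Icc 1 i, lam' j) ↔
      (∀ i, 1 ≤ i → AA α β i ≤ AA α' β' i ∧ BB α β i ≤ BB α' β' i) := by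
  obtain ⟨ha, hb, -⟩ := hp
  obtain ⟨ha', hb', -⟩ := hp'
  have F := formulas α β δ θ lam ha hb hδ hθ hlam
  have F' := formulas α' β' δ' θ' lam' ha' hb' hδ' hθ' hlam'
  constructor
  · intro h i hi
    have h1 := h (2 * i) (by omega)
    have h2 := h (2 * i - 1) (by omega)
    rw [(F i hi).2, (F' i hi).2] at h1
    rw [(F i hi).1, (F' i hi).1] at h2
    constructor
    · split_ifs at h1 <;> omega
    · split_ifs at h2 <;> omega
  · intro h m hm
    rcases Nat.even_or_odd m with he | ho
    · obtain ⟨k, hk⟩ := he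
      have hk1 : 1 ≤ k := by omega
      rw [show m = 2 * k from by omega, (F k hk1).2, (F' k hk1).2]
      have hA := (h k hk1).1
      have hB := (h k hk1).2
      have hB1 := (h (k + 1) (by omega)).2
      have hAB := AA_eq_BB α β k hk1
      have hAB' := AA_eq_BB α' β' k hk1
      have hBd : BB α β (k + 1) = AA α β k + α (k + 1) := BB_def α β (k + 1)
      have hBd' : BB α' β' (k + 1) = AA α' β' k + α' (k + 1) := BB_def α' β' (k + 1)
      have hL1 := (hL' k hk1).1
      split_ifs <;> omega
    · obtain ⟨k, hk⟩ := ho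
      rw [show m = 2 * (k + 1) - 1 from by omega, (F (k + 1) (by omega)).1,
        (F' (k + 1) (by omega)).1]
      have hB := (h (k + 1) (by omega)).2
      have hA := (h (k + 1) (by omega)).1
      have hA0 : AA α β k ≤ AA α' β' k := by
        rcases Nat.eq_zero_or_pos k with h0 | h0
        · subst h0; simp [AA]
        · exact (h k h0).1
      have hBd : BB α β (k + 1) = AA α β k + α (k + 1) := BB_def α β (k + 1)
      have hBd' : BB α' β' (k + 1) = AA α' β' k + α' (k + 1) := BB_def α' β' (k + 1)
      have hAB := AA_eq_BB α β (k + 1) (by omega)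
      have hAB' := AA_eq_BB α' β' (k + 1) (by omega)
      have hL2 := (hL' (k + 1) (by omega)).2
      split_ifs <;> omega
end

section
/- With the Springer correspondence data for Sp(2n) in characteristic 2 (λ_{2i−1} = 2α_i + δ_i, λ_{2i} = 2β_i + θ_i): λ_{2i−1} = λ_{2i} if and only if β_i ≥ α_i, or (i ≥ 2 and β_i = β_{i−1}, α_i = α_{i+1}, β_i ≤ α_{i+1} − 1); and λ_{2i} = λ_{2i+1} if and only if β_i ≤ α_{i+1}, or (β_i = β_{i+1}, α_i = α_{i+1}, β_i ≥ α_i + 1). -/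
open Finset

set_option maxHeartbeats 2000000 in
/-- when consecutive parts of `λ` coincide, for `Sp(2n)` in characteristic 2. -/
theorem stmt9 (α β : ℕ → ℕ) (δ θ : ℕ → ℤ) (lam : ℕ → ℤ)
    (hα : Decr α) (hβ : Decr β)
    (h1 : ∀ i, 1 ≤ i → α (i + 1) ≤ β i + 2) (h2 : ∀ i, 1 ≤ i → β i ≤ α i + 2)
    (hδ : ∀ i, 1 ≤ i → δ i =
      if β i = α i + 2 then 2 else if β i = α i + 1 then 1 else
      if 2 ≤ i ∧ α i = β (i - 1) + 2 then -2 else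
      if 2 ≤ i ∧ α i = β (i - 1) + 1 then -1 else 0)
    (hθ : ∀ i, 1 ≤ i → θ i =
      if β i + 2 = α (i + 1) then 2 else if β i + 1 = α (i + 1) then 1 else
      if β i = α i + 2 then -2 else if β i = α i + 1 then -1 else 0)
    (hlam : ∀ i, 1 ≤ i →
      lam (2 * i - 1) = 2 * (α i : ℤ) + δ i ∧ lam (2 * i) = 2 * (β i : ℤ) + θ i)
    (i : ℕ) (hi : 1 ≤ i) :
    (lam (2 * i - 1) = lam (2 * i) ↔
      (α i ≤ β i ∨ (2 ≤ i ∧ β i = β (i - 1) ∧ α i = α (i + 1) ∧ β i + 1 ≤ α (i + 1)))) ∧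
    (lam (2 * i) = lam (2 * i + 1) ↔
      (β i ≤ α (i + 1) ∨ (β i = β (i + 1) ∧ α i = α (i + 1) ∧ α i + 1 ≤ β i))) := by

  obtain ⟨j, rfl⟩ : ∃ j, i = j + 1 := ⟨i - 1, (Nat.succ_pred_eq_of_pos hi).symm⟩
  have hd := hδ (j+1) (by omega)
  have ht := hθ (j+1) (by omega)
  have hd2 := hδ (j+2) (by omega)
  obtain ⟨hl1, hl2⟩ := hlam (j+1) (by omega)
  obtain ⟨hl3, -⟩ := hlam (j+2) (by omega)
  rw [show 2*(j+1)-1 = 2*j+1 from by omega] at hl1 ⊢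
  rw [show 2*(j+2)-1 = 2*(j+1)+1 from by omega] at hl3
  have g1 := hα (j+1) (by omega)
  have g2 := hβ (j+1) (by omega)
  have g3 := h1 (j+1) (by omega)
  have g4 := h2 (j+1) (by omega)
  have g5 := h2 (j+2) (by omega)
  simp only [show j+1-1 = j from rfl, show j+2-1 = j+1 from rfl,
    show j+1+1 = j+2 from rfl] at hd hd2 ht hl3 hl1 hl2 g1 g2 g3 g4 g5 ⊢
  rcases Nat.eq_zero_or_pos j with rfl | hj
  · split_ifs at hd ht hd2 <;> omega
  · have g6 := hα j hj
    have g7 := hβ j hj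
    have g8 := h1 j hj
    have g9 := h2 j hj
    split_ifs at hd ht hd2 <;> omega
end

section
/- With the Springer correspondence data for Sp(2n) in characteristic 2: if β_i = α_i + 2 then λ*_{λ_{2i}+1} is even, and if i ≥ 2 and α_i = β_{i−1} + 2 then λ*_{λ_{2i−1}+1} is odd, where λ* is the conjugate partition of λ. -/
open Finset

/-!
For `c = λ_q`, the parts of `λ` exceeding `c` are `λ_1, …, λ_m` with `m = λ*_{c+1} < q`, so
`λ_m > c = λ_{m+1}`: position `m` is a strict descent. In the theorem, a part equal to `c` at an even
position `2j ≤ 2i` (resp. odd position `2j - 1 ≤ 2i - 1`) is as small as `θ_j` (resp. `δ_j`) allows,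
so `θ_j = -2` (resp. `δ_j = -2`), and the definitions of `δ, θ` then give the tie
`λ_{2j-1} = λ_{2j}` (resp. `λ_{2j-2} = λ_{2j-1}`). Hence `m + 1` is odd (resp. even).
-/

section Conjugate

variable {f : ℕ → ℕ}

lemma Decr.le_of_le (hf : Decr f) {j k : ℕ} (hj : 1 ≤ j) (hjk : j ≤ k) : f k ≤ f j := by
  induction k, hjk using Nat.le_induction with
  | base => exact le_rfl
  | succ k hjk ih => exact (hf k (hj.trans hjk)).trans ih

lemma Decr.le_apply_iff_le_find (hf : Decr f) {c k : ℕ} (h : ∃ n, f (n + 1) < c) (hk : 1 ≤ k) :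
    c ≤ f k ↔ k ≤ Nat.find h := by
  constructor
  · intro hck
    by_contra! hlt
    exact absurd ((hf.le_of_le (by omega) hlt).trans_lt (Nat.find_spec h)) (not_lt.2 hck)
  · intro hkn
    have := Nat.find_min h (show k - 1 < Nat.find h by omega)
    rwa [Nat.sub_add_cancel hk, not_lt] at this

lemma Decr.conj_eq_find (hf : Decr f) {c : ℕ} (h : ∃ n, f (n + 1) < c) :
    conj f c = Nat.find h := by
  have hset : {k : ℕ | 1 ≤ k ∧ c ≤ f k} = Set.Icc 1 (Nat.find h) := by
    ext k
    simp only [Set.mem_ofPred_eq, Set.mem_Icc, and_congr_right_iff]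
    exact fun hk => hf.le_apply_iff_le_find h hk
  rw [conj, hset, ← Finset.coe_Icc, Set.ncard_coe_finset, Nat.card_Icc, Nat.add_sub_cancel]

lemma Decr.le_conj_iff (hf : Decr f) {c k : ℕ} (h : ∃ n, f (n + 1) < c) (hk : 1 ≤ k) :
    k ≤ conj f c ↔ c ≤ f k := by
  rw [hf.conj_eq_find h, hf.le_apply_iff_le_find h hk]

variable {q : ℕ}

lemma exists_apply_succ_lt_apply_add_one (hq : 1 ≤ q) : ∃ n, f (n + 1) < f q + 1 :=
  ⟨q - 1, by rw [Nat.sub_add_cancel hq]; omega⟩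

lemma Decr.conj_apply_add_one_lt (hf : Decr f) (hq : 1 ≤ q) : conj f (f q + 1) < q := by
  by_contra! h
  have := (hf.le_conj_iff (exists_apply_succ_lt_apply_add_one hq) hq).1 h
  omega

lemma Decr.apply_conj_apply_add_one_add_one (hf : Decr f) (hq : 1 ≤ q) :
    f (conj f (f q + 1) + 1) = f q := by
  have hlt := hf.conj_apply_add_one_lt hq
  have hout := (hf.le_conj_iff (exists_apply_succ_lt_apply_add_one hq) (by omega :
    1 ≤ conj f (f q + 1) + 1)).not.1 (by omega)
  have := hf.le_of_le (j := conj f (f q + 1) + 1) (by omega) hlt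
  omega

lemma Decr.lt_apply_conj_apply_add_one (hf : Decr f) (hq : 1 ≤ q) (hm : 1 ≤ conj f (f q + 1)) :
    f q < f (conj f (f q + 1)) :=
  (hf.le_conj_iff (exists_apply_succ_lt_apply_add_one hq) hm).1 le_rfl

lemma Decr.not_conj_apply_add_one_add_one_of_ties (hf : Decr f) (hq : 1 ≤ q) {P : ℕ → Prop}
    (hties : ∀ p, 2 ≤ p → p ≤ q → P p → f p = f q → f (p - 1) = f p)
    (hm : 1 ≤ conj f (f q + 1)) : ¬ P (conj f (f q + 1) + 1) := by
  intro hP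
  have htie := hties (conj f (f q + 1) + 1) (by omega) (hf.conj_apply_add_one_lt hq) hP
    (hf.apply_conj_apply_add_one_add_one hq)
  rw [Nat.add_sub_cancel, hf.apply_conj_apply_add_one_add_one hq] at htie
  exact (hf.lt_apply_conj_apply_add_one hq hm).ne htie.symm

lemma Decr.even_conj_apply_add_one (hf : Decr f) (hq : 1 ≤ q)
    (hties : ∀ p, 2 ≤ p → p ≤ q → Even p → f p = f q → f (p - 1) = f p) :
    Even (conj f (f q + 1)) := by
  by_contra hm
  rw [Nat.not_even_iff_odd] at hm
  exact hf.not_conj_apply_add_one_add_one_of_ties hq hties hm.pos hm.add_one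

lemma Decr.odd_conj_apply_add_one (hf : Decr f) (hq : 1 ≤ q) (hq1 : f q < f 1)
    (hties : ∀ p, 2 ≤ p → p ≤ q → Odd p → f p = f q → f (p - 1) = f p) :
    Odd (conj f (f q + 1)) := by
  have hm : 1 ≤ conj f (f q + 1) :=
    (hf.le_conj_iff (exists_apply_succ_lt_apply_add_one hq) le_rfl).2 hq1
  by_contra he
  rw [Nat.not_odd_iff_even] at he
  exact hf.not_conj_apply_add_one_add_one_of_ties hq hties hm he.add_one

end Conjugate

section Springer

def springerDelta (α β : ℕ → ℕ) (i : ℕ) : ℤ :=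
  if β i = α i + 2 then 2 else if β i = α i + 1 then 1 else
  if 2 ≤ i ∧ α i = β (i - 1) + 2 then -2 else
  if 2 ≤ i ∧ α i = β (i - 1) + 1 then -1 else 0

def springerTheta (α β : ℕ → ℕ) (i : ℕ) : ℤ :=
  if β i + 2 = α (i + 1) then 2 else if β i + 1 = α (i + 1) then 1 else
  if β i = α i + 2 then -2 else if β i = α i + 1 then -1 else 0

def IsSpringerPartition (α β lam : ℕ → ℕ) : Prop :=
  ∀ i, 1 ≤ i → (lam (2 * i - 1) : ℤ) = 2 * (α i : ℤ) + springerDelta α β i ∧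
    (lam (2 * i) : ℤ) = 2 * (β i : ℤ) + springerTheta α β i

variable {α β lam : ℕ → ℕ} {i j : ℕ}

lemma springerDelta_eq_two (h : β i = α i + 2) : springerDelta α β i = 2 := by
  simp [springerDelta, h]

lemma springerDelta_eq_neg_two (hi : 2 ≤ i) (h : α i = β (i - 1) + 2)
    (hβ : β i ≤ β (i - 1)) : springerDelta α β i = -2 := by
  unfold springerDelta
  split_ifs <;> omega

lemma springerTheta_eq_two (h : β i + 2 = α (i + 1)) : springerTheta α β i = 2 := by
  simp [springerTheta, h]

lemma springerTheta_eq_neg_two (h : β i = α i + 2) (hα : α (i + 1) ≤ α i) :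
    springerTheta α β i = -2 := by
  unfold springerTheta
  split_ifs <;> omega

lemma neg_two_le_springerDelta : -2 ≤ springerDelta α β i := by
  unfold springerDelta
  split_ifs <;> norm_num

lemma neg_two_le_springerTheta : -2 ≤ springerTheta α β i := by
  unfold springerTheta
  split_ifs <;> norm_num

lemma eq_add_two_of_springerTheta_le (h : springerTheta α β i ≤ -2) : β i = α i + 2 := by
  unfold springerTheta at h
  split_ifs at h <;> omega

lemma eq_pred_add_two_of_springerDelta_le (h : springerDelta α β i ≤ -2) :
    2 ≤ i ∧ α i = β (i - 1) + 2 := by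
  unfold springerDelta at h
  split_ifs at h <;> omega

namespace IsSpringerPartition

lemma lam_two_mul_sub_one_eq_of_le (h : IsSpringerPartition α β lam) (hj : 1 ≤ j)
    (hle : (lam (2 * j) : ℤ) ≤ 2 * β j - 2) : lam (2 * j - 1) = lam (2 * j) := by
  obtain ⟨hodd, heven⟩ := h j hj
  have hβ := eq_add_two_of_springerTheta_le (show springerTheta α β j ≤ -2 by omega)
  rw [springerDelta_eq_two hβ] at hodd
  have := neg_two_le_springerTheta (α := α) (β := β) (i := j)
  omega

lemma lam_two_mul_sub_two_eq_of_le (h : IsSpringerPartition α β lam) (hj : 1 ≤ j)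
    (hle : (lam (2 * j - 1) : ℤ) ≤ 2 * α j - 2) : 2 ≤ j ∧ lam (2 * j - 2) = lam (2 * j - 1) := by
  obtain ⟨hj2, hα⟩ := eq_pred_add_two_of_springerDelta_le (show springerDelta α β j ≤ -2 by
    have := (h j hj).1; omega)
  refine ⟨hj2, ?_⟩
  have hθ := springerTheta_eq_two (α := α) (β := β) (i := j - 1)
    (by rw [Nat.sub_add_cancel hj, hα])
  have hprev := (h (j - 1) (by omega)).2
  rw [hθ, show 2 * (j - 1) = 2 * j - 2 by omega] at hprev
  have := neg_two_le_springerDelta (α := α) (β := β) (i := j)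
  have := (h j hj).1
  omega

lemma even_conj_lam_two_mul_add_one (h : IsSpringerPartition α β lam) (hβ : Decr β)
    (hdec : Decr lam) (hi : 1 ≤ i) (hb : β i = α i + 2) (hα : α (i + 1) ≤ α i) :
    Even (conj lam (lam (2 * i) + 1)) := by
  have hlam : (lam (2 * i) : ℤ) = 2 * β i - 2 := by
    rw [(h i hi).2, springerTheta_eq_neg_two hb hα]
    ring
  refine hdec.even_conj_apply_add_one (by omega) fun p hp hpi ⟨j, hpj⟩ htie => ?_
  rw [hpj, ← two_mul] at htie hpi ⊢
  have := hβ.le_of_le (j := j) (k := i) (by omega) (by omega)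
  exact h.lam_two_mul_sub_one_eq_of_le (by omega) (by omega)

lemma odd_conj_lam_two_mul_sub_one_add_one (h : IsSpringerPartition α β lam) (hα : Decr α)
    (hdec : Decr lam) (hi : 2 ≤ i) (ha : α i = β (i - 1) + 2) (hβ : β i ≤ β (i - 1)) :
    Odd (conj lam (lam (2 * i - 1) + 1)) := by
  have hlam : (lam (2 * i - 1) : ℤ) = 2 * α i - 2 := by
    rw [(h i (by omega)).1, springerDelta_eq_neg_two hi ha hβ]
    ring
  have hαi := hα.le_of_le (k := i) le_rfl (by omega)
  have hfirst : lam (2 * i - 1) < lam 1 := by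
    by_contra! hle
    have := (h.lam_two_mul_sub_two_eq_of_le (j := 1) le_rfl (by norm_num; omega)).1
    omega
  refine hdec.odd_conj_apply_add_one (by omega) hfirst fun p hp hpi ⟨k, hpk⟩ htie => ?_
  rw [hpk, show 2 * k + 1 = 2 * (k + 1) - 1 by omega] at htie hpi ⊢
  have := hα.le_of_le (j := k + 1) (k := i) (by omega) (by omega)
  rw [show 2 * (k + 1) - 1 - 1 = 2 * (k + 1) - 2 by omega]
  exact (h.lam_two_mul_sub_two_eq_of_le (by omega) (by omega)).2

end IsSpringerPartition

end Springer

theorem stmt10_general (α β : ℕ → ℕ) (δ θ : ℕ → ℤ) (lam : ℕ → ℕ)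
    (hα : Decr α) (hβ : Decr β)
    (hδ : ∀ i, 1 ≤ i → δ i =
      if β i = α i + 2 then 2 else if β i = α i + 1 then 1 else
      if 2 ≤ i ∧ α i = β (i - 1) + 2 then -2 else
      if 2 ≤ i ∧ α i = β (i - 1) + 1 then -1 else 0)
    (hθ : ∀ i, 1 ≤ i → θ i =
      if β i + 2 = α (i + 1) then 2 else if β i + 1 = α (i + 1) then 1 else
      if β i = α i + 2 then -2 else if β i = α i + 1 then -1 else 0)
    (hlam : ∀ i, 1 ≤ i →
      (lam (2 * i - 1) : ℤ) = 2 * (α i : ℤ) + δ i ∧ (lam (2 * i) : ℤ) = 2 * (β i : ℤ) + θ i)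
    (hdec : Decr lam)
    (i : ℕ) (hi : 1 ≤ i) :
    (β i = α i + 2 → Even (conj lam (lam (2 * i) + 1))) ∧
    (2 ≤ i → α i = β (i - 1) + 2 → Odd (conj lam (lam (2 * i - 1) + 1))) := by
  have hS : IsSpringerPartition α β lam := fun i hi =>
    ⟨(hlam i hi).1.trans (congrArg _ (hδ i hi)), (hlam i hi).2.trans (congrArg _ (hθ i hi))⟩
  refine ⟨fun hb => hS.even_conj_lam_two_mul_add_one hβ hdec hi hb (hα i hi),
    fun hi2 ha => hS.odd_conj_lam_two_mul_sub_one_add_one hα hdec hi2 ha ?_⟩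
  simpa only [Nat.sub_add_cancel hi] using hβ (i - 1) (by omega)

/-- parity of `λ*_{λ_{2i}+1}` and `λ*_{λ_{2i−1}+1}` for `Sp(2n)`, char 2. -/
theorem stmt10 (α β : ℕ → ℕ) (δ θ : ℕ → ℤ) (lam : ℕ → ℕ)
    (hα : Decr α) (hβ : Decr β)
    (hz : ∃ N, ∀ i, N < i → α i = 0 ∧ β i = 0)
    (h1 : ∀ i, 1 ≤ i → α (i + 1) ≤ β i + 2) (h2 : ∀ i, 1 ≤ i → β i ≤ α i + 2)
    (hδ : ∀ i, 1 ≤ i → δ i =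
      if β i = α i + 2 then 2 else if β i = α i + 1 then 1 else
      if 2 ≤ i ∧ α i = β (i - 1) + 2 then -2 else
      if 2 ≤ i ∧ α i = β (i - 1) + 1 then -1 else 0)
    (hθ : ∀ i, 1 ≤ i → θ i =
      if β i + 2 = α (i + 1) then 2 else if β i + 1 = α (i + 1) then 1 else
      if β i = α i + 2 then -2 else if β i = α i + 1 then -1 else 0)
    (hlam : ∀ i, 1 ≤ i →
      (lam (2 * i - 1) : ℤ) = 2 * (α i : ℤ) + δ i ∧ (lam (2 * i) : ℤ) = 2 * (β i : ℤ) + θ i)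
    (hdec : Decr lam)
    (i : ℕ) (hi : 1 ≤ i) :
    (β i = α i + 2 → Even (conj lam (lam (2 * i) + 1))) ∧
    (2 ≤ i → α i = β (i - 1) + 2 → Odd (conj lam (lam (2 * i - 1) + 1))) :=
  stmt10_general α β δ θ lam hα hβ hδ hθ hlam hdec i hi
end

section
/- The map Φ on Λ²_{B_n} = {(α,β) pairs of partitions of total size n with α_{i+1} − 2 ≤ β_i ≤ α_i + 2} defined by: α̃_1 = α_1; α̃_i = ⌊(α_i + β_{i−1})/2⌋ if α_i > β_{i−1} and α̃_i = α_i if α_i ≤ β_{i−1} (i ≥ 2); β̃_i = ⌊(α_{i+1} + β_i + 1)/2⌋ if β_i < α_{i+1} and β̃_i = β_i otherwise; is a well-defined map into Λ¹_{B_n} = {(α,β) : α_{i+1} ≤ β_i ≤ α_i + 2 for all i}; that is, (α̃, β̃) is again a pair of partitions with |α̃|+|β̃| = n satisfying α̃_{i+1} ≤ β̃_i ≤ α̃_i + 2 for all i. -/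
open Finset

/-- the map `Φ` for type `B_n` is well defined into `Λ¹_{B_n}`. -/
theorem stmt11 (n : ℕ) (α β α' β' : ℕ → ℕ)
    (hα : Decr α) (hβ : Decr β)
    (hL2 : ∀ i, 1 ≤ i → α (i + 1) ≤ β i + 2 ∧ β i ≤ α i + 2)
    (ha1 : α' 1 = α 1)
    (ha : ∀ i, 2 ≤ i → α' i = if β (i - 1) < α i then (α i + β (i - 1)) / 2 else α i)
    (hb : ∀ i, 1 ≤ i → β' i = if β i < α (i + 1) then (α (i + 1) + β i + 1) / 2 else β i) :
    Decr α' ∧ Decr β' ∧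
    (∀ i, 1 ≤ i → α' (i + 1) ≤ β' i ∧ β' i ≤ α' i + 2) ∧
    (∀ N, (∀ i, N < i → α i = 0 ∧ β i = 0) → psum α N + psum β N = n →
      (∀ i, N < i → α' i = 0 ∧ β' i = 0) ∧ psum α' N + psum β' N = n) := by

  have hA : ∀ i, 2 ≤ i → (α' i = α i ∧ α i ≤ β (i - 1)) ∨ (α' i + 1 = α i ∧ β (i - 1) < α i) := by
    intro i hi
    have h2 : α i ≤ β (i - 1) + 2 := by
      have h := (hL2 (i - 1) (by omega)).1
      rwa [Nat.sub_add_cancel (by omega)] at h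
    rcases Nat.lt_or_ge (β (i - 1)) (α i) with h | h
    · right
      refine ⟨?_, h⟩
      rw [ha i hi, if_pos h]
      omega
    · exact Or.inl ⟨by rw [ha i hi, if_neg (by omega)], h⟩
  have hB : ∀ i, 1 ≤ i → (β' i = β i ∧ α (i + 1) ≤ β i) ∨ (β' i = β i + 1 ∧ β i < α (i + 1)) := by
    intro i hi
    have h2 : α (i + 1) ≤ β i + 2 := (hL2 i hi).1
    rcases Nat.lt_or_ge (β i) (α (i + 1)) with h | h
    · right
      refine ⟨?_, h⟩
      rw [hb i hi, if_pos h]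
      omega
    · exact Or.inl ⟨by rw [hb i hi, if_neg (by omega)], h⟩
  have key : ∀ i, 1 ≤ i → α' (i + 1) + β' i = α (i + 1) + β i := by
    intro i hi
    have h1 := hA (i + 1) (by omega)
    rw [Nat.add_sub_cancel] at h1
    have h2 := hB i hi
    omega
  have hDA : Decr α' := by
    intro i hi
    rcases Nat.lt_or_ge i 2 with h1 | h1
    · have hi1 : i = 1 := by omega
      subst hi1
      have h3 := hA (1 + 1) (by omega)
      rw [Nat.add_sub_cancel] at h3
      have h5 : α (1 + 1) ≤ α 1 := hα 1 le_rfl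
      omega
    · have h2 := hA i h1
      have h3 := hA (i + 1) (by omega)
      rw [Nat.add_sub_cancel] at h3
      have h4 : β i ≤ β (i - 1) := by
        have h := hβ (i - 1) (by omega)
        rwa [Nat.sub_add_cancel (by omega)] at h
      have h5 := hα i (by omega)
      omega
  have hDB : Decr β' := by
    intro i hi
    have h2 := hB i hi
    have h3 := hB (i + 1) (by omega)
    have h4 := hβ i hi
    have h5 := hα (i + 1) (by omega)
    omega
  have hIneq : ∀ i, 1 ≤ i → α' (i + 1) ≤ β' i ∧ β' i ≤ α' i + 2 := by
    intro i hi
    have h3 := hA (i + 1) (by omega)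
    rw [Nat.add_sub_cancel] at h3
    have h2 := hB i hi
    have hL := hL2 i hi
    rcases Nat.lt_or_ge i 2 with h1 | h1
    · have hi1 : i = 1 := by omega
      subst hi1
      have h5 : α (1 + 1) ≤ α 1 := hα 1 le_rfl
      omega
    · have h6 := hA i h1
      have h4 : β i ≤ β (i - 1) := by
        have h := hβ (i - 1) (by omega)
        rwa [Nat.sub_add_cancel (by omega)] at h
      have h5 := hα i (by omega)
      omega
  refine ⟨hDA, hDB, hIneq, ?_⟩
  intro N hN hsum
  have hzero : ∀ i, N < i → α' i = 0 ∧ β' i = 0 := by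
    intro i hi
    constructor
    · rcases Nat.lt_or_ge i 2 with h1 | h1
      · have hi1 : i = 1 := by omega
        subst hi1
        rw [ha1]
        exact (hN 1 hi).1
      · have h2 := hA i h1
        have h3 := (hN i hi).1
        omega
    · have h2 := hB i (by omega)
      have h3 := (hN i hi).2
      have h4 := (hN (i + 1) (by omega)).1
      omega
  have hP : ∀ m, 1 ≤ m → psum α' m + psum β' m + β m = psum α m + psum β m + β' m := by
    intro m
    induction m with
    | zero => omega
    | succ k ih =>
      intro _
      rcases Nat.lt_or_ge k 1 with hk | hk
      · have hk0 : k = 0 := by omega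
        subst hk0
        simp [psum]
        omega
      · have ih' := ih hk
        have hkey := key k hk
        have e1 : psum α' (k + 1) = psum α' k + α' (k + 1) := by
          unfold psum; exact Finset.sum_Icc_succ_top (by omega) _
        have e2 : psum β' (k + 1) = psum β' k + β' (k + 1) := by
          unfold psum; exact Finset.sum_Icc_succ_top (by omega) _
        have e3 : psum α (k + 1) = psum α k + α (k + 1) := by
          unfold psum; exact Finset.sum_Icc_succ_top (by omega) _
        have e4 : psum β (k + 1) = psum β k + β (k + 1) := by
          unfold psum; exact Finset.sum_Icc_succ_top (by omega) _
        omega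
  refine ⟨hzero, ?_⟩
  rcases Nat.eq_zero_or_pos N with h0 | h0
  · subst h0
    simpa [psum] using hsum
  · have hP' := hP N h0
    have hbN : β' N = β N := by
      have h2 := hB N h0
      have h4 := (hN (N + 1) (by omega)).1
      omega
    omega
end

section
/- Let (α,β) ∈ Λ²_{B_n} and (α̃, β̃) = Φ(α,β) as defined for type B_n. Then (α,β) ≤ (α̃, β̃) in the order given by A_i ≤ Ã_i and B_i ≤ B̃_i for all i, where A_i = ∑_{j≤i}(α_j+β_j), B_i = ∑_{j<i}(α_j+β_j)+α_i. Moreover B_i = B̃_i for all i, and A_i < Ã_i precisely when β_i < α_{i+1}. -/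
open Finset

/-- `(α,β) ≤ Φ(α,β)` for type `B_n`, with `B_i = B̃_i` and
`A_i < Ã_i` exactly when `β_i < α_{i+1}`. -/
theorem stmt12 (α β α' β' : ℕ → ℕ)
    (hα : Decr α) (hβ : Decr β)
    (hL2 : ∀ i, 1 ≤ i → α (i + 1) ≤ β i + 2 ∧ β i ≤ α i + 2)
    (ha1 : α' 1 = α 1)
    (ha : ∀ i, 2 ≤ i → α' i = if β (i - 1) < α i then (α i + β (i - 1)) / 2 else α i)
    (hb : ∀ i, 1 ≤ i → β' i = if β i < α (i + 1) then (α (i + 1) + β i + 1) / 2 else β i)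
    (i : ℕ) (hi : 1 ≤ i) :
    BB α β i = BB α' β' i ∧ AA α β i ≤ AA α' β' i ∧
      (AA α β i < AA α' β' i ↔ β i < α (i + 1)) := by
  -- key: β' j + α' (j+1) = β j + α (j+1)
  have key : ∀ j, 1 ≤ j → β' j + α' (j + 1) = β j + α (j + 1) := by
    intro j hj
    have h1 := hb j hj
    have h2 := ha (j + 1) (by omega)
    simp only [Nat.add_sub_cancel] at h2
    by_cases h : β j < α (j + 1)
    · rw [if_pos h] at h1; rw [if_pos h] at h2; omega
    · rw [if_neg h] at h1; rw [if_neg h] at h2; omega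
  have sum_split : ∀ (f g : ℕ → ℕ) (k : ℕ), 1 ≤ k →
      ∑ j ∈ Finset.Icc 1 k, (f j + g j)
        = (∑ j ∈ Finset.Icc 1 (k - 1), (f j + g j)) + (f k + g k) := by
    intro f g k hk
    have : k = (k - 1) + 1 := by omega
    rw [this, Finset.sum_Icc_succ_top (by omega : 1 ≤ k - 1 + 1)]
    simp
  have step : ∀ (f g : ℕ → ℕ) (k : ℕ), 1 ≤ k →
      BB f g (k + 1) = BB f g k + g k + f (k + 1) := by
    intro f g k hk
    unfold BB
    rw [Nat.add_sub_cancel, sum_split f g k hk]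
    ring
  have AAeq : ∀ (f g : ℕ → ℕ) (k : ℕ), 1 ≤ k → AA f g k = BB f g k + g k := by
    intro f g k hk
    unfold AA BB
    rw [sum_split f g k hk]; ring
  have hBB : ∀ k, 1 ≤ k → BB α β k = BB α' β' k := by
    intro k hk
    induction k, hk using Nat.le_induction with
    | base =>
      unfold BB
      simp [ha1]
    | succ n hn ih =>
      rw [step α β n hn, step α' β' n hn, ih]
      have := key n hn
      omega
  refine ⟨hBB i hi, ?_, ?_⟩ <;>
  · rw [AAeq α β i hi, AAeq α' β' i hi, hBB i hi]
    have h1 := hb i hi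
    by_cases h : β i < α (i + 1)
    · rw [if_pos h] at h1; omega
    · rw [if_neg h] at h1; omega
end

section
/- Let (α,β) ∈ Λ²_{B_n} and (α̃, β̃) = Φ(α,β). If (α̃', β̃') ∈ Λ¹_{B_n} satisfies (α,β) ≤ (α̃', β̃'), then (α̃, β̃) ≤ (α̃', β̃'). In other words, Φ(α,β) is the minimum element of Λ¹_{B_n} above (α,β). -/
open Finset

lemma BB_one' (f g : ℕ → ℕ) : BB f g 1 = f 1 := by
  simp [BB]

lemma AA_eq' (f g : ℕ → ℕ) (k : ℕ) : AA f g (k + 1) = BB f g (k + 1) + g (k + 1) := by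
  simp only [AA, BB, Nat.add_sub_cancel]
  rw [Finset.sum_Icc_succ_top (by omega : 1 ≤ k + 1)]
  omega

lemma BB_succ' (f g : ℕ → ℕ) (i : ℕ) : BB f g (i + 1) = AA f g i + f (i + 1) := by
  simp [BB, AA]

/-- `Φ(α,β)` is minimal in `Λ¹_{B_n}` above `(α,β)`. -/
theorem stmt13 (α β α' β' α'' β'' : ℕ → ℕ)
    (hα : Decr α) (hβ : Decr β)
    (hL2 : ∀ i, 1 ≤ i → α (i + 1) ≤ β i + 2 ∧ β i ≤ α i + 2)
    (ha1 : α' 1 = α 1)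
    (ha : ∀ i, 2 ≤ i → α' i = if β (i - 1) < α i then (α i + β (i - 1)) / 2 else α i)
    (hb : ∀ i, 1 ≤ i → β' i = if β i < α (i + 1) then (α (i + 1) + β i + 1) / 2 else β i)
    (hα'' : Decr α'') (hβ'' : Decr β'')
    (hL1 : ∀ i, 1 ≤ i → α'' (i + 1) ≤ β'' i ∧ β'' i ≤ α'' i + 2)
    (hord : ∀ i, 1 ≤ i → AA α β i ≤ AA α'' β'' i ∧ BB α β i ≤ BB α'' β'' i) :
    ∀ i, 1 ≤ i → AA α' β' i ≤ AA α'' β'' i ∧ BB α' β' i ≤ BB α'' β'' i := by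
  have key : ∀ j, 1 ≤ j → β' j + α' (j + 1) = β j + α (j + 1) := by
    intro j hj
    have h1 := hb j hj
    have h2 := ha (j + 1) (by omega)
    simp only [Nat.add_sub_cancel] at h2
    by_cases h : β j < α (j + 1)
    · rw [if_pos h] at h1 h2; omega
    · rw [if_neg h] at h1 h2; omega
  have hBeq : ∀ i, 1 ≤ i → BB α' β' i = BB α β i := by
    intro i hi
    induction i with
    | zero => omega
    | succ k ih =>
      rcases Nat.lt_or_ge k 1 with hk | hk
      · interval_cases k
        rw [BB_one', BB_one', ha1]
      · obtain ⟨m, rfl⟩ : ∃ m, k = m + 1 := ⟨k - 1, by omega⟩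
        rw [BB_succ', BB_succ', AA_eq' α' β' m, AA_eq' α β m, ih hk]
        have := key (m + 1) hk
        omega
  intro i hi
  obtain ⟨k, rfl⟩ : ∃ k, i = k + 1 := ⟨i - 1, by omega⟩
  have hB := hBeq (k + 1) hi
  refine ⟨?_, by rw [hB]; exact (hord _ hi).2⟩
  have hA' := AA_eq' α' β' k
  have e3 := AA_eq' α β k
  have e4 := AA_eq' α'' β'' k
  by_cases h : β (k + 1) < α (k + 2)
  · have hb1 := hb (k + 1) hi
    rw [if_pos h] at hb1
    have e1 := BB_succ' α'' β'' (k + 1)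
    have e2 := BB_succ' α β (k + 1)
    have h1 := (hord (k + 1) hi).2
    have h2 := (hord (k + 2) (by omega)).2
    have h3 := (hL1 (k + 1) hi).1
    simp only [show k + 1 + 1 = k + 2 from rfl] at *
    omega
  · have hb1 := hb (k + 1) hi
    rw [if_neg h] at hb1
    have := (hord (k + 1) hi).1
    omega
end

section
/- The map Φ on Λ²_{D_n} = {(α,β) pairs of partitions of total size n with α_{i+1} − 4 ≤ β_i ≤ α_i} defined by: α̃_1 = α_1; α̃_i = ⌊(α_i + β_{i−1} + 2)/2⌋ if α_i > β_{i−1} + 2 and α̃_i = α_i otherwise (i ≥ 2); β̃_i = ⌊(α_{i+1} + β_i − 1)/2⌋ if β_i < α_{i+1} − 2 and β̃_i = β_i otherwise; is a well-defined map into Λ¹_{D_n} = {(α,β) : α_{i+1} − 2 ≤ β_i ≤ α_i for all i}, and moreover Φ(α,β) = (α̃, α̃) implies (α,β) = (α̃, α̃). -/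
open Finset

/-- the map `Φ` for type `D_n` is well defined into `Λ¹_{D_n}`,
and is degenerate only on degenerate pairs. -/
theorem stmt14 (n : ℕ) (α β α' β' : ℕ → ℕ)
    (hα : Decr α) (hβ : Decr β)
    (hL2 : ∀ i, 1 ≤ i → α (i + 1) ≤ β i + 4 ∧ β i ≤ α i)
    (ha1 : α' 1 = α 1)
    (ha : ∀ i, 2 ≤ i → α' i = if β (i - 1) + 2 < α i then (α i + β (i - 1) + 2) / 2 else α i)
    (hb : ∀ i, 1 ≤ i → β' i = if β i + 2 < α (i + 1) then (α (i + 1) + β i - 1) / 2 else β i) :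
    Decr α' ∧ Decr β' ∧
    (∀ i, 1 ≤ i → α' (i + 1) ≤ β' i + 2 ∧ β' i ≤ α' i) ∧
    (∀ N, (∀ i, N < i → α i = 0 ∧ β i = 0) → psum α N + psum β N = n →
      (∀ i, N < i → α' i = 0 ∧ β' i = 0) ∧ psum α' N + psum β' N = n) ∧
    ((∀ i, 1 ≤ i → β' i = α' i) → ∀ i, 1 ≤ i → α i = α' i ∧ β i = α' i) := by
  have key : ∀ i, 1 ≤ i →
      (β i + 2 < α (i+1) ∧ α' (i+1) = α (i+1) - 1 ∧ β' i = β i + 1 ∧ 3 ≤ α (i+1)) ∨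
      (α (i+1) ≤ β i + 2 ∧ α' (i+1) = α (i+1) ∧ β' i = β i) := by
    intro i hi
    have hab := hL2 i hi
    have e1 := ha (i+1) (by omega)
    have e2 := hb i hi
    rw [Nat.add_sub_cancel] at e1
    by_cases h : β i + 2 < α (i+1)
    · rw [if_pos h] at e1 e2
      left
      exact ⟨h, by omega, by omega, by omega⟩
    · rw [if_neg h] at e1 e2
      right
      exact ⟨by omega, e1, e2⟩
  have hda : Decr α' := by
    intro i hi
    rcases eq_or_lt_of_le hi with h | h
    · have := key 1 le_rfl
      have := hα 1 le_rfl
      subst h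
      omega
    · obtain ⟨k, rfl⟩ : ∃ k, i = k + 1 := ⟨i - 1, by omega⟩
      have hk : 1 ≤ k := by omega
      have h1 := key k hk
      have h2 := key (k+1) (by omega)
      have h3 := hα (k+1) (by omega)
      have h4 := hβ k hk
      omega
  have hdb : Decr β' := by
    intro i hi
    have h1 := key i hi
    have h2 := key (i+1) (by omega)
    have h3 := hα (i+1) (by omega)
    have h4 := hβ i hi
    omega
  refine ⟨hda, hdb, ?_, ?_, ?_⟩
  · intro i hi
    have h1 := key i hi
    have h2 := hL2 i hi
    constructor
    · omega
    · rcases eq_or_lt_of_le hi with h | h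
      · have := hα 1 le_rfl
        subst h
        omega
      · obtain ⟨k, rfl⟩ : ∃ k, i = k + 1 := ⟨i - 1, by omega⟩
        have hk : 1 ≤ k := by omega
        have h3 := key k hk
        have h4 := hβ k hk
        have h5 := hα (k+1) (by omega)
        omega
  · have hsum : ∀ M, 1 ≤ M →
        psum α' M + psum β' M + β M = psum α M + psum β M + β' M := by
      intro M hM
      induction M, hM using Nat.le_induction with
      | base =>
        simp only [psum, Finset.Icc_self, Finset.sum_singleton]
        omega
      | succ M hM ih =>
        have e : ∀ f : ℕ → ℕ, psum f (M+1) = psum f M + f (M+1) := by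
          intro f
          exact Finset.sum_Icc_succ_top (by omega) f
        have h1 := key M hM
        rw [e α', e β', e α, e β]
        omega
    intro N hzero hn
    have hz' : ∀ i, N < i → α' i = 0 ∧ β' i = 0 := by
      intro i hi
      have hz1 := hzero i hi
      have hz2 := hzero (i+1) (by omega)
      have h1 := key i (by omega)
      constructor
      · rcases Nat.eq_or_lt_of_le (show 1 ≤ i by omega) with h | h
        · rw [← h] at hz1 ⊢
          omega
        · obtain ⟨k, rfl⟩ : ∃ k, i = k + 1 := ⟨i - 1, by omega⟩
          have h2 := key k (by omega)
          omega
      · omega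
    refine ⟨hz', ?_⟩
    rcases Nat.eq_zero_or_pos N with h | h
    · subst h
      simp only [psum, show Finset.Icc 1 0 = ∅ from rfl, Finset.sum_empty] at hn ⊢
      omega
    · have h1 := hsum N h
      have h2 := key N h
      have h3 := hzero (N+1) (by omega)
      omega
  · intro hdeg
    have main : ∀ i, 1 ≤ i → α' i = α i ∧ β i = α' i := by
      intro i hi
      induction i, hi using Nat.le_induction with
      | base =>
        have h1 := key 1 le_rfl
        have h2 := hα 1 le_rfl
        have h3 := hdeg 1 le_rfl
        omega
      | succ i hi ih =>
        have h1 := key i hi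
        have h2 := key (i+1) (by omega)
        have h3 := hdeg i hi
        have h4 := hdeg (i+1) (by omega)
        have h5 := hα (i+1) (by omega)
        omega
    intro i hi
    have := main i hi
    omega
end

section
/- For the type C map Φ on Λ²_{C_n} (with Φ(α,β) = (α̃,β̃) as defined via the case analysis on β_i vs α_i+1 and β_{i−1} vs α_i−1): for every i ≥ 1, (1) if β_i > α_i + 1 then B̃_i > B_i and Ã_i = A_i; (2) if α_{i+1} − 1 ≤ β_i ≤ α_i + 1 then Ã_i = A_i and B̃_i = B_i; (3) if β_i < α_{i+1} − 1 then B̃_i = B_i and Ã_i > A_i. In particular (α,β) ≤ (α̃,β̃). -/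
open Finset

/-- case analysis for `Φ` in type `C_n`; in particular `(α,β) ≤ Φ(α,β)`. -/
theorem stmt16 (α β α' β' : ℕ → ℕ)
    (hα : Decr α) (hβ : Decr β)
    (hL2 : ∀ i, 1 ≤ i → α (i + 1) ≤ β i + 2 ∧ β i ≤ α i + 2)
    (ha1 : α' 1 = if α 1 + 1 < β 1 then (α 1 + β 1) / 2 else α 1)
    (hb1 : β' 1 = if α 1 + 1 < β 1 then (α 1 + β 1 + 1) / 2 else
      if β 1 + 1 < α 2 then (α 2 + β 1) / 2 else β 1)
    (ha : ∀ i, 2 ≤ i → α' i = if α i + 1 < β i then (α i + β i) / 2 else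
      if β (i - 1) + 1 < α i then (α i + β (i - 1) + 1) / 2 else α i)
    (hb : ∀ i, 2 ≤ i → β' i = if α i + 1 < β i then (α i + β i + 1) / 2 else
      if β i + 1 < α (i + 1) then (α (i + 1) + β i) / 2 else β i)
    (i : ℕ) (hi : 1 ≤ i) :
    (α i + 1 < β i → BB α β i < BB α' β' i ∧ AA α' β' i = AA α β i) ∧
    (α (i + 1) ≤ β i + 1 → β i ≤ α i + 1 →
      AA α' β' i = AA α β i ∧ BB α' β' i = BB α β i) ∧
    (β i + 1 < α (i + 1) → BB α' β' i = BB α β i ∧ AA α β i < AA α' β' i) ∧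
    AA α β i ≤ AA α' β' i ∧ BB α β i ≤ BB α' β' i := by
  -- pointwise lemma for β'
  have pb : ∀ j, 1 ≤ j → β' j + (if α j + 1 < β j then 1 else 0)
      = β j + (if β j + 1 < α (j + 1) then 1 else 0) := by
    intro j hj
    have h1 := (hL2 j hj).2
    have h2 := (hL2 j hj).1
    have h3 := hα j hj
    rcases Nat.lt_or_ge j 2 with hj2 | hj2
    · have hj1 : j = 1 := by omega
      subst hj1
      have h4 : α (1 + 1) = α 2 := by norm_num
      rw [hb1]
      split_ifs <;> omega
    · rw [hb j hj2]
      split_ifs <;> omega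
  -- pointwise lemma for α'
  have pa : ∀ j, 2 ≤ j → α' j + (if β (j - 1) + 1 < α j then 1 else 0)
      = α j + (if α j + 1 < β j then 1 else 0) := by
    intro j hj
    have h1 := (hL2 j (by omega)).2
    have h2 := (hL2 (j - 1) (by omega)).1
    have h3 := hβ (j - 1) (by omega)
    have hjj : j - 1 + 1 = j := by omega
    rw [hjj] at h2 h3
    rw [ha j hj]
    split_ifs <;> omega
  have key : ∀ i, 1 ≤ i →
      AA α' β' i = AA α β i + (if β i + 1 < α (i + 1) then 1 else 0) ∧
      BB α' β' i = BB α β i + (if α i + 1 < β i then 1 else 0) := by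
    intro i hi
    induction i, hi using Nat.le_induction with
    | base =>
      have hb1' := pb 1 le_rfl
      have h1 := (hL2 1 le_rfl).2
      have eA : AA α' β' 1 = α' 1 + β' 1 := by simp [AA]
      have eA' : AA α β 1 = α 1 + β 1 := by simp [AA]
      have eB : BB α' β' 1 = α' 1 := by simp [BB]
      have eB' : BB α β 1 = α 1 := by simp [BB]
      rw [eA, eA', eB, eB', ha1]
      split_ifs at hb1' ⊢ <;> omega
    | succ i hi IH =>
      obtain ⟨IA, IB⟩ := IH
      have pai := pa (i + 1) (by omega)
      have pbi := pb (i + 1) (by omega)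
      simp only [Nat.add_sub_cancel] at pai
      have eA : AA α' β' (i + 1) = AA α' β' i + (α' (i + 1) + β' (i + 1)) :=
        Finset.sum_Icc_succ_top (by omega) _
      have eA' : AA α β (i + 1) = AA α β i + (α (i + 1) + β (i + 1)) :=
        Finset.sum_Icc_succ_top (by omega) _
      have eB : BB α' β' (i + 1) = AA α' β' i + α' (i + 1) := by
        simp [BB, AA]
      have eB' : BB α β (i + 1) = AA α β i + α (i + 1) := by
        simp [BB, AA]
      constructor
      · rw [eA, eA', IA]
        split_ifs at pai pbi ⊢ <;> omega
      · rw [eB, eB', IA]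
        split_ifs at pai pbi ⊢ <;> omega
  obtain ⟨hA, hB⟩ := key i hi
  have h3 := hα i hi
  refine ⟨fun h => ?_, fun h1 h2 => ?_, fun h => ?_, ?_, ?_⟩ <;>
    split_ifs at hA hB <;> omega
end
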